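/- Let N ≥ 1, 0 ≤ r ≤ N-1, and let e_j be as in the previous context. Define T_0 = 1, T_m = 0 for m < 0, and suppose T satisfies the recursion T_m = Σ_{j=0}^{r} (-1)^j e_{N+1}^j e_{N-j} T_{m-j-1} for m > 0. Then the generating function T(t) = Σ_{m≥0} T_m t^m equals 1/((1 - (-1)^{N-1} t) · ∏_{p=1}^{r} (1 - (-1)^{N-1} x_p y t)). -/

import Mathlib

/-! Put `ε = (-1)^(N-1)` and `P(z) = (y+z)∏(1+x_p z)`. The denominator `D(t)` is a polynomial
with `y·D(t) = P(-εyt)`, so its coefficients are `d_k = (-εy)^k P_k / y`; since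
`e_{N+1} = (-1)^N y` and `e_{N-j} = (-1)^(N-j+1) P_{j+1}`, the recursion coefficient
`(-1)^j e_{N+1}^j e_{N-j}` is exactly `-d_{j+1}`. The recursion therefore says that every
coefficient of `D·T` vanishes except the constant one, which is `1`. -/

open Polynomial

noncomputable abbrev KF (r : ℕ) : Type := FractionRing (MvPolynomial (Fin (r + 1)) ℚ)

noncomputable def yv (r : ℕ) : KF r :=
  algebraMap (MvPolynomial (Fin (r + 1)) ℚ) (KF r) (MvPolynomial.X 0)

noncomputable def xv (r : ℕ) (p : Fin r) : KF r :=
  algebraMap (MvPolynomial (Fin (r + 1)) ℚ) (KF r) (MvPolynomial.X p.succ)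

/-- The polynomial `(y+z)(1+z x_1)⋯(1+z x_r)` in the variable `z`. -/
noncomputable def Pz (r : ℕ) : Polynomial (KF r) :=
  (Polynomial.C (yv r) + Polynomial.X) *
    ∏ p : Fin r, (1 + Polynomial.C (xv r p) * Polynomial.X)

/-- `e_j = (-1)^(j-1) [z^(N+1-j)]((y+z)∏(1+z x_p))` for `0 ≤ j ≤ N+1`, else `0`. -/
noncomputable def elemE (N r : ℕ) (j : ℤ) : KF r :=
  if 0 ≤ j ∧ j ≤ (N : ℤ) + 1 then
    (-1 : KF r) ^ (j + 1).toNat * (Pz r).coeff (N + 1 - j.toNat)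
  else 0

lemma C_mul_one_sub_mul_prod_eq_comp {R ι : Type*} [CommRing R] (s : Finset ι) (c y : R)
    (x : ι → R) :
    C y * ((1 - C c * X) * ∏ p ∈ s, (1 - C (c * x p * y) * X)) =
      ((C y + X) * ∏ p ∈ s, (1 + C (x p) * X)).comp (C (-(c * y)) * X) := by
  rw [mul_comp, prod_comp, ← mul_assoc]
  congr 1
  · simp only [add_comp, C_comp, X_comp, C_neg, C_mul]
    ring
  · refine Finset.prod_congr rfl fun p _ => ?_
    simp only [add_comp, one_comp, mul_comp, C_comp, X_comp, C_neg, C_mul]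
    ring

theorem coe_mul_mk_eq_one_of_linear_recurrence {R : Type*} [CommRing R] (D : R[X]) {n : ℕ}
    (hD : D.natDegree ≤ n) (hD0 : D.coeff 0 = 1) (T : ℤ → R) (hT0 : T 0 = 1)
    (hTneg : ∀ m : ℤ, m < 0 → T m = 0)
    (hrec : ∀ m : ℤ, 0 < m → ∑ j ∈ Finset.range (n + 1), D.coeff j * T (m - j) = 0) :
    (D : PowerSeries R) * PowerSeries.mk (fun m : ℕ => T m) = 1 := by
  have hcoeff (m : ℕ) :
      PowerSeries.coeff m ((D : PowerSeries R) * PowerSeries.mk (fun m : ℕ => T m)) =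
        ∑ j ∈ Finset.range (n + 1), D.coeff j * T (m - j) := by
    set f : ℕ → R := fun j => D.coeff j * T (m - j)
    have hf : ∀ j, m < j ∨ n < j → f j = 0 := by
      rintro j (hj | hj)
      · simp [f, hTneg _ (by omega : (m : ℤ) - j < 0)]
      · simp [f, coeff_eq_zero_of_natDegree_lt (hD.trans_lt hj)]
    have hsub (k : ℕ) (hk : k = m ∨ k = n) :
        ∑ j ∈ Finset.range (k + 1), f j = ∑ j ∈ Finset.range (m + n + 1), f j := by
      refine Finset.sum_subset (Finset.range_subset_range.mpr (by omega)) fun j _ hjk => ?_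
      exact hf j (by rw [Finset.mem_range] at hjk; omega)
    rw [PowerSeries.coeff_mul, Finset.Nat.sum_antidiagonal_eq_sum_range_succ_mk,
      hsub n (.inr rfl), ← hsub m (.inl rfl)]
    refine Finset.sum_congr rfl fun j hj => ?_
    rw [Finset.mem_range] at hj
    simp [f, Polynomial.coeff_coe, Nat.cast_sub (by omega : j ≤ m)]
  ext m
  rw [hcoeff, PowerSeries.coeff_one]
  rcases Nat.eq_zero_or_pos m with rfl | hm
  · rw [Finset.sum_eq_single 0 (fun j _ hj => by rw [hTneg _ (by omega), mul_zero]) (by simp)]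
    simp [hD0, hT0]
  · rw [if_neg hm.ne', hrec m (by omega)]

noncomputable def denomPoly (N r : ℕ) : (KF r)[X] :=
  (1 - C ((-1 : KF r) ^ (N - 1)) * X) *
    ∏ p : Fin r, (1 - C ((-1 : KF r) ^ (N - 1) * xv r p * yv r) * X)

lemma coe_denomPoly (N r : ℕ) :
    (denomPoly N r : PowerSeries (KF r)) =
      (1 - PowerSeries.C (R := KF r) ((-1) ^ (N - 1)) * PowerSeries.X) *
        ∏ p : Fin r,
          (1 - PowerSeries.C (R := KF r) ((-1) ^ (N - 1) * xv r p * yv r) * PowerSeries.X) := by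
  have hlin (a : KF r) : ((1 - C a * X : (KF r)[X]) : PowerSeries (KF r)) =
      1 - PowerSeries.C a * PowerSeries.X := by
    rw [coe_sub, coe_one, coe_mul, coe_C, coe_X]
  rw [denomPoly, ← coeToPowerSeries.ringHom_apply, map_mul, map_prod]
  simp only [coeToPowerSeries.ringHom_apply, hlin]

lemma yv_ne_zero (r : ℕ) : yv r ≠ 0 := by
  rw [yv, Ne, IsFractionRing.to_map_eq_zero_iff]
  exact MvPolynomial.X_ne_zero 0

lemma yv_mul_coeff_denomPoly (N r k : ℕ) :
    yv r * (denomPoly N r).coeff k = (Pz r).coeff k * (-((-1) ^ (N - 1) * yv r)) ^ k := by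
  rw [← coeff_C_mul, denomPoly, C_mul_one_sub_mul_prod_eq_comp, comp_C_mul_X_coeff, Pz]

lemma coeff_zero_denomPoly (N r : ℕ) : (denomPoly N r).coeff 0 = 1 := by
  simp only [denomPoly, coeff_zero_eq_eval_zero, eval_mul, eval_prod, eval_sub, eval_one,
    eval_C, eval_X, mul_zero, sub_zero, Finset.prod_const_one, mul_one]

lemma natDegree_denomPoly_le (N r : ℕ) : (denomPoly N r).natDegree ≤ r + 1 := by
  have hlin (a : KF r) : (1 - C a * X).natDegree ≤ 1 :=
    (natDegree_sub_le _ _).trans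
      (max_le (natDegree_one.trans_le zero_le_one) ((natDegree_C_mul_le _ _).trans natDegree_X_le))
  have hprod :
      (∏ p : Fin r, (1 - C ((-1 : KF r) ^ (N - 1) * xv r p * yv r) * X)).natDegree ≤ r := by
    refine (natDegree_prod_le _ _).trans
      ((Finset.sum_le_card_nsmul _ _ 1 fun p _ => hlin _).trans ?_)
    rw [Finset.card_univ, Fintype.card_fin, smul_eq_mul, mul_one]
  rw [denomPoly]
  exact natDegree_mul_le.trans ((add_le_add (hlin _) hprod).trans_eq (add_comm 1 r))

lemma elemE_natCast_add_one (N r : ℕ) : elemE N r ((N : ℤ) + 1) = (-1) ^ N * yv r := by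
  rw [elemE, if_pos ⟨by positivity, le_rfl⟩, show ((N : ℤ) + 1 + 1).toNat = N + 2 by omega,
    show ((N : ℤ) + 1).toNat = N + 1 by omega, Nat.sub_self, coeff_zero_eq_eval_zero]
  simp [Pz, eval_prod, pow_succ]

lemma elemE_natCast_sub (N r j : ℕ) (hj : j ≤ N) :
    elemE N r ((N : ℤ) - j) = (-1) ^ (N + j + 1) * (Pz r).coeff (j + 1) := by
  rw [elemE, if_pos ⟨by omega, by omega⟩, show ((N : ℤ) - j + 1).toNat = N - j + 1 by omega,
    show ((N : ℤ) - j).toNat = N - j by omega, show N + 1 - (N - j) = j + 1 by omega,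
    show N + j + 1 = N - j + 1 + 2 * j by omega, pow_add _ (N - j + 1), pow_mul]
  simp

lemma recurrence_coeff_eq_neg_coeff_denomPoly (N r j : ℕ) (hN : 1 ≤ N) (hj : j ≤ N) :
    (-1) ^ j * elemE N r ((N : ℤ) + 1) ^ j * elemE N r ((N : ℤ) - j)
      = -(denomPoly N r).coeff (j + 1) := by
  refine mul_left_cancel₀ (yv_ne_zero r) ?_
  have hsign : -((-1 : KF r) ^ (N - 1) * yv r) = (-1) ^ N * yv r := by
    rw [← neg_mul, ← neg_one_mul, ← pow_succ', Nat.sub_add_cancel hN]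
  have hsq : ((-1 : KF r) ^ j) ^ 2 = 1 := by rw [← pow_mul, pow_mul', neg_one_sq, one_pow]
  rw [mul_neg, yv_mul_coeff_denomPoly, elemE_natCast_add_one, elemE_natCast_sub N r j hj, hsign]
  linear_combination (-((-1) ^ N * yv r) ^ (j + 1) * (Pz r).coeff (j + 1)) * hsq

theorem genFun_of_recursion (N r : ℕ) (hN : 1 ≤ N) (hr : r ≤ N - 1)
    (T : ℤ → KF r) (hT0 : T 0 = 1) (hTneg : ∀ m : ℤ, m < 0 → T m = 0)
    (hrec : ∀ m : ℤ, 0 < m →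
      T m = ∑ j ∈ Finset.range (r + 1),
        (-1 : KF r) ^ j * elemE N r ((N : ℤ) + 1) ^ j * elemE N r ((N : ℤ) - j) *
          T (m - j - 1)) :
    PowerSeries.mk (fun m : ℕ => T m)
      = ((1 - PowerSeries.C (R := KF r) ((-1) ^ (N - 1)) * PowerSeries.X) *
          ∏ p : Fin r,
            (1 - PowerSeries.C (R := KF r) ((-1) ^ (N - 1) * xv r p * yv r) * PowerSeries.X))⁻¹ := by
  have hD0 : PowerSeries.constantCoeff (denomPoly N r : PowerSeries (KF r)) ≠ 0 := by
    rw [← PowerSeries.coeff_zero_eq_constantCoeff_apply, coeff_coe, coeff_zero_denomPoly]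
    exact one_ne_zero
  rw [← coe_denomPoly, PowerSeries.eq_inv_iff_mul_eq_one hD0, mul_comm]
  refine coe_mul_mk_eq_one_of_linear_recurrence _ (natDegree_denomPoly_le N r)
    (coeff_zero_denomPoly N r) T hT0 hTneg fun m hm => ?_
  rw [Finset.sum_range_succ', coeff_zero_denomPoly, Nat.cast_zero, sub_zero, one_mul, hrec m hm,
    ← Finset.sum_add_distrib]
  refine Finset.sum_eq_zero fun j hj => ?_
  rw [recurrence_coeff_eq_neg_coeff_denomPoly N r j hN (by rw [Finset.mem_range] at hj; omega),
    Nat.cast_succ, ← sub_sub, neg_mul, add_neg_cancel]
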